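/- arXiv:1512.07275 — 2 statements merged into one kernel-verified Lean document; each statement's English description precedes it below -/
import Mathlib

section
/- Let S be an additive commutative monoid and let F be a nonempty set of positive integers that is closed under multiplication (a multiplicative subsemigroup of the positive integers). Then for every A ⊆ S, conv_F(A) = ⋃_{n∈F} n⁻¹([n]A). -/
open Pointwise

/-- The dilation `nA = {n • x : x ∈ A}`. -/
def dilate {S : Type*} [AddCommMonoid S] (n : ℕ) (A : Set S) : Set S :=
  (fun x => n • x) '' A

/-- The "inverse dilation" `n⁻¹A = {x : n • x ∈ A}`. -/
def invDilate {S : Type*} [AddCommMonoid S] (n : ℕ) (A : Set S) : Set S :=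
  {x | n • x ∈ A}

/-- The `n`-fold sumset `[n]A = {x₁ + ⋯ + xₙ : xᵢ ∈ A}`. -/
def foldSum {S : Type*} [AddCommMonoid S] (n : ℕ) (A : Set S) : Set S :=
  {y | ∃ f : Fin n → S, (∀ i, f i ∈ A) ∧ y = ∑ i, f i}

/-- `A` is `n`-convex if `n⁻¹([n]A) ⊆ A`. -/
def IsNConvex {S : Type*} [AddCommMonoid S] (n : ℕ) (A : Set S) : Prop :=
  invDilate n (foldSum n A) ⊆ A

/-- `A` is `n`-konvex if `[n]A ⊆ nA`. -/
def IsNKonvex {S : Type*} [AddCommMonoid S] (n : ℕ) (A : Set S) : Prop :=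
  foldSum n A ⊆ dilate n A

/-- `A` is `F`-convex if it is `n`-convex for every `n ∈ F`. -/
def IsFConvex {S : Type*} [AddCommMonoid S] (F : Set ℕ) (A : Set S) : Prop :=
  ∀ n ∈ F, IsNConvex n A

/-- `A` is `F`-konvex if it is `n`-konvex for every `n ∈ F`. -/
def IsFKonvex {S : Type*} [AddCommMonoid S] (F : Set ℕ) (A : Set S) : Prop :=
  ∀ n ∈ F, IsNKonvex n A

/-- The `F`-convex hull of `A`. -/
def convHullF {S : Type*} [AddCommMonoid S] (F : Set ℕ) (A : Set S) : Set S :=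
  ⋂₀ {C | A ⊆ C ∧ IsFConvex F C}

/-- The set of positive integers. -/
def posNat : Set ℕ := {n | 0 < n}

/-- `A` and `B` are `F`-disjoint if `[n]A ∩ [n]B = ∅` for all `n ∈ F`. -/
def FDisjoint {S : Type*} [AddCommMonoid S] (F : Set ℕ) (A B : Set S) : Prop :=
  ∀ n ∈ F, foldSum n A ∩ foldSum n B = ∅

lemma foldSum_mono {S : Type*} [AddCommMonoid S] (n : ℕ) {A B : Set S} (h : A ⊆ B) :
    foldSum n A ⊆ foldSum n B := by
  rintro y ⟨f, hf, rfl⟩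
  exact ⟨f, fun i => h (hf i), rfl⟩

lemma smul_mem_foldSum_self {S : Type*} [AddCommMonoid S] (n : ℕ) {A : Set S} {x : S}
    (hx : x ∈ A) : n • x ∈ foldSum n A := by
  refine ⟨fun _ => x, fun _ => hx, ?_⟩
  simp [Finset.sum_const]

lemma add_mem_foldSum {S : Type*} [AddCommMonoid S] {a b : ℕ} {A : Set S} {y z : S}
    (hy : y ∈ foldSum a A) (hz : z ∈ foldSum b A) : y + z ∈ foldSum (a + b) A := by
  obtain ⟨f, hf, rfl⟩ := hy
  obtain ⟨g, hg, rfl⟩ := hz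
  refine ⟨Fin.append f g, ?_, ?_⟩
  · intro i
    rcases lt_or_ge (i : ℕ) a with h | h
    · have : i = Fin.castAdd b ⟨i, h⟩ := by ext; rfl
      rw [this, Fin.append_left]; exact hf _
    · have : i = Fin.natAdd a ⟨i - a, by omega⟩ := by ext; simp; omega
      rw [this, Fin.append_right]; exact hg _
  · rw [Fin.sum_univ_add]
    simp

lemma smul_mem_foldSum {S : Type*} [AddCommMonoid S] {n : ℕ} {A : Set S} {y : S}
    (hy : y ∈ foldSum n A) (k : ℕ) : k • y ∈ foldSum (k * n) A := by
  induction k with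
  | zero => rw [Nat.zero_mul, zero_smul]; exact ⟨fun i => i.elim0, fun i => i.elim0, by simp⟩
  | succ k ih =>
    have := add_mem_foldSum hy ih
    rw [succ_nsmul', Nat.succ_mul, Nat.add_comm]
    exact this

lemma sum_mem_foldSum {S : Type*} [AddCommMonoid S] {N : ℕ} {A : Set S} :
    ∀ (m : ℕ) (f : Fin m → S), (∀ i, f i ∈ foldSum N A) → ∑ i, f i ∈ foldSum (m * N) A := by
  intro m
  induction m with
  | zero => intro f _; rw [Nat.zero_mul]; exact ⟨fun i => i.elim0, fun i => i.elim0, by simp⟩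
  | succ m ih =>
    intro f hf
    rw [Fin.sum_univ_succ, Nat.succ_mul, Nat.add_comm]
    exact add_mem_foldSum (hf 0) (ih _ (fun i => hf i.succ))

lemma prod_mem_F {F : Set ℕ} (hmul : ∀ m ∈ F, ∀ n ∈ F, m * n ∈ F) :
    ∀ (m : ℕ) (n : Fin (m + 1) → ℕ), (∀ i, n i ∈ F) → ∏ i, n i ∈ F := by
  intro m
  induction m with
  | zero => intro n hn; simpa using hn 0
  | succ m ih =>
    intro n hn
    rw [Fin.prod_univ_succ]
    exact hmul _ (hn 0) _ (ih _ (fun i => hn i.succ))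

theorem stmt11 {S : Type*} [AddCommMonoid S] (F : Set ℕ) (hF : F.Nonempty)
    (hpos : ∀ n ∈ F, 0 < n) (hmul : ∀ m ∈ F, ∀ n ∈ F, m * n ∈ F) (A : Set S) :
    convHullF F A = ⋃ n ∈ F, invDilate n (foldSum n A) := by
  set B : Set S := ⋃ n ∈ F, invDilate n (foldSum n A) with hB
  apply Set.Subset.antisymm
  · -- convHullF ⊆ B : show B is F-convex and contains A
    obtain ⟨n₀, hn₀⟩ := hF
    have hAB : A ⊆ B := by
      intro x hx
      exact Set.mem_biUnion hn₀ (smul_mem_foldSum_self n₀ hx)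
    have hconv : IsFConvex F B := by
      intro m hm x hx
      -- hx : m • x ∈ foldSum m B
      obtain ⟨f, hf, hsum⟩ := hx
      -- for each i, choose nᵢ ∈ F with nᵢ • f i ∈ foldSum nᵢ A
      have hchoice : ∀ i : Fin m, ∃ n ∈ F, n • f i ∈ foldSum n A := by
        intro i
        obtain ⟨_, ⟨n, rfl⟩, _, ⟨hn, rfl⟩, hmem⟩ := hf i
        exact ⟨n, hn, hmem⟩
      choose ν hνF hν using hchoice
      obtain ⟨m', rfl⟩ : ∃ m', m = m' + 1 := ⟨m - 1, by have := hpos m hm; omega⟩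
      set N := ∏ i, ν i with hN
      have hNF : N ∈ F := prod_mem_F hmul m' ν hνF
      -- each N • f i ∈ foldSum N A
      have hNf : ∀ i, N • f i ∈ foldSum N A := by
        intro i
        have h1 : N = (∏ j ∈ Finset.univ.erase i, ν j) * ν i := by
          rw [hN, ← Finset.mul_prod_erase _ _ (Finset.mem_univ i), Nat.mul_comm]
        rw [h1, Nat.mul_comm, mul_comm, mul_smul]
        exact smul_mem_foldSum (hν i) _
      have hsumN : ∑ i, N • f i ∈ foldSum ((m' + 1) * N) A :=
        sum_mem_foldSum _ _ hNf
      have key : ((m' + 1) * N) • x ∈ foldSum ((m' + 1) * N) A := by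
        have : ((m' + 1) * N) • x = ∑ i, N • f i := by
          rw [Nat.mul_comm, mul_smul, hsum, Finset.smul_sum]
        rw [this]; exact hsumN
      exact Set.mem_biUnion (hmul _ hm _ hNF) key
    intro x hx
    exact hx B ⟨hAB, hconv⟩
  · -- B ⊆ convHullF
    intro x hx
    obtain ⟨_, ⟨n, rfl⟩, _, ⟨hn, rfl⟩, hmem⟩ := hx
    intro C hC
    exact hC.2 n hn (foldSum_mono n hC.1 hmem)
end

section
/- Let S be an additive commutative monoid, let F be a nonempty set of positive integers, and let A, B ⊆ S be F-disjoint sets with A ∪ B = S (complementary F-disjoint sets). Then both A and B are F-convex. If, in addition, S itself is F-konvex, then A and B are also F-konvex. -/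
open Pointwise

lemma const_mem_foldSum {S : Type*} [AddCommMonoid S] {n : ℕ} {A : Set S} {x : S}
    (hx : x ∈ A) : n • x ∈ foldSum n A := by
  exact ⟨fun _ => x, fun _ => hx, by simp⟩

theorem stmt17 {S : Type*} [AddCommMonoid S] (F : Set ℕ) (hF : F.Nonempty)
    (hpos : ∀ n ∈ F, 0 < n) (A B : Set S)
    (hdisj : FDisjoint F A B) (hcompl : A ∪ B = Set.univ) :
    IsFConvex F A ∧ IsFConvex F B ∧
    (IsFKonvex F (Set.univ : Set S) → IsFKonvex F A ∧ IsFKonvex F B) := by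
  have key : ∀ n ∈ F, ∀ x : S, n • x ∈ foldSum n A → x ∈ A := by
    intro n hn x hx
    by_contra hxA
    have hxB : x ∈ B := by
      have := hcompl ▸ Set.mem_univ x
      rcases (Set.mem_union _ _ _).1 this with h | h
      · exact absurd h hxA
      · exact h
    have : n • x ∈ foldSum n A ∩ foldSum n B := ⟨hx, const_mem_foldSum hxB⟩
    simpa [hdisj n hn] using this
  have key' : ∀ n ∈ F, ∀ x : S, n • x ∈ foldSum n B → x ∈ B := by
    intro n hn x hx
    by_contra hxB
    have hxA : x ∈ A := by
      have := hcompl ▸ Set.mem_univ x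
      rcases (Set.mem_union _ _ _).1 this with h | h
      · exact h
      · exact absurd h hxB
    have : n • x ∈ foldSum n A ∩ foldSum n B := ⟨const_mem_foldSum hxA, hx⟩
    simpa [hdisj n hn] using this
  refine ⟨fun n hn x hx => key n hn x hx, fun n hn x hx => key' n hn x hx, ?_⟩
  intro huniv
  constructor
  · intro n hn y hy
    have hyu : y ∈ foldSum n (Set.univ : Set S) := by
      obtain ⟨f, hf, rfl⟩ := hy
      exact ⟨f, fun _ => Set.mem_univ _, rfl⟩
    obtain ⟨x, -, rfl⟩ := huniv n hn hyu
    exact ⟨x, key n hn x hy, rfl⟩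
  · intro n hn y hy
    have hyu : y ∈ foldSum n (Set.univ : Set S) := by
      obtain ⟨f, hf, rfl⟩ := hy
      exact ⟨f, fun _ => Set.mem_univ _, rfl⟩
    obtain ⟨x, -, rfl⟩ := huniv n hn hyu
    exact ⟨x, key' n hn x hy, rfl⟩
end
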